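/- arXiv:1707.07302 — 3 statements merged into one kernel-verified Lean document; each statement's English description precedes it below -/
import Mathlib

section
/- Let K be a field and let I_1,…,I_r be equigenerated monomial ideals of height 2 in K[x,y]. Then μ(I_1 ⋯ I_r) ≥ Σ_{j=1}^r μ(I_j) − (r − 1), and equality holds if and only if either r = 1, or r > 1 and there exist positive integers a and s_1,…,s_r such that I_j = (x^a, y^a)^{s_j} for j = 1,…,r. -/
open MvPolynomial

/-- The minimal number of generators of an ideal. -/
noncomputable def mu {R : Type*} [CommRing R] (I : Ideal R) : ℕ :=
  sInf {m : ℕ | ∃ s : Finset R, s.card = m ∧ Ideal.span (s : Set R) = I}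

/-- An equigenerated monomial ideal: generated by monomials all of the same total degree. -/
def IsEquigenMonomialIdeal {K : Type*} [Field K] {n : ℕ}
    (I : Ideal (MvPolynomial (Fin n) K)) : Prop :=
  ∃ (d : ℕ) (S : Set (Fin n →₀ ℕ)), S.Nonempty ∧ (∀ v ∈ S, (∑ i, v i) = d) ∧
    I = Ideal.span ((fun v => monomial v (1 : K)) '' S)

/-- A monomial ideal of `K[x,y]` has height 2 iff it is proper and contains a power of `x`
and a power of `y`. -/
def HasHeightTwo {K : Type*} [Field K] (I : Ideal (MvPolynomial (Fin 2) K)) : Prop :=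
  I ≠ ⊤ ∧ ∃ k l : ℕ, 0 < k ∧ 0 < l ∧
    (X 0 : MvPolynomial (Fin 2) K) ^ k ∈ I ∧ (X 1 : MvPolynomial (Fin 2) K) ^ l ∈ I

/-!
Write an equigenerated monomial ideal of degree `d` in `K[x,y]` as `(x^a y^(d-a) : a ∈ A)` with
`A ⊆ [0, d]`; height 2 means `0, d ∈ A`. Its monomial generators stay independent in degree `d`
(in degree `d`, `c * f` only sees the constant term of `c`), so `μ = #A`, and multiplying ideals
adds exponent sets. The theorem thus becomes the Cauchy–Davenport bound
`#(A₁ + ⋯ + A_r) ≥ ∑ #Aⱼ - (r - 1)` in `ℕ` together with its equality case. Equality for the whole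
family forces equality for every pair. For a pair with `#(A + B) = #A + #B - 1`, the sumset is
exactly `A ∪ (d + B)`; hence `A` is closed, below `d`, under adding the least positive element of
`B`, and vice versa. So both least positive elements agree, say `g`, and `A`, `B` are
`{0, g, 2g, …}`.
-/

open Finset Pointwise

theorem Finset.Nonempty.finsetSum {ι α : Type*} [AddCommMonoid α] [DecidableEq α]
    {s : Finset ι} {A : ι → Finset α}
    (hA : ∀ j ∈ s, (A j).Nonempty) : (∑ j ∈ s, A j).Nonempty := by
  choose! a ha using hA
  rw [← coe_nonempty, coe_sum]
  exact ⟨_, Set.finsetSum_mem_finsetSum s _ a ha⟩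

theorem sum_mem_upperBounds_sum {ι α : Type*} [AddCommMonoid α] [PartialOrder α]
    [IsOrderedAddMonoid α] {s : Finset ι} {A : ι → Set α} {d : ι → α}
    (h : ∀ j ∈ s, d j ∈ upperBounds (A j)) : ∑ j ∈ s, d j ∈ upperBounds (∑ j ∈ s, A j) := by
  rintro _ hx
  obtain ⟨a, ha, rfl⟩ := (Set.mem_finsetSum s A _).1 hx
  exact sum_le_sum fun j hj => h j hj (ha hj)

section CauchyDavenport

variable {ι α : Type*} [AddCommMonoid α] [LinearOrder α] [IsOrderedCancelAddMonoid α]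

theorem card_sum_add_le {s : Finset ι} {A : ι → Finset α} (hA : ∀ j ∈ s, (A j).Nonempty) :
    ∑ j ∈ s, #(A j) + 1 ≤ #(∑ j ∈ s, A j) + #s := by
  induction s using Finset.cons_induction with
  | empty => simp
  | cons i s hi ih =>
    have hAi := hA i (mem_cons_self i s)
    have hsum := Nonempty.finsetSum fun j hj => hA j (mem_cons_of_mem hj)
    have hs := ih fun j hj => hA j (mem_cons_of_mem hj)
    have hcd : #(A i) + #(∑ j ∈ s, A j) - 1 ≤ #(A i + ∑ j ∈ s, A j) :=
      cauchy_davenport_add_of_linearOrder_isCancelAdd hAi hsum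
    have hAi_pos := hAi.card_pos
    rw [sum_cons, sum_cons, card_cons]
    omega

theorem card_sum_add_le_of_subset {s t : Finset ι} {A : ι → Finset α}
    (hA : ∀ j ∈ s, (A j).Nonempty) (hts : t ⊆ s)
    (h : #(∑ j ∈ s, A j) + #s ≤ ∑ j ∈ s, #(A j) + 1) :
    #(∑ j ∈ t, A j) + #t ≤ ∑ j ∈ t, #(A j) + 1 := by
  classical
  rw [← sum_sdiff hts, ← sum_sdiff hts, ← card_sdiff_add_card_eq_card hts] at h
  have hrest := card_sum_add_le (s := s \ t) fun j hj => hA j (sdiff_subset hj)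
  have hsum : (∑ j ∈ t, A j).Nonempty := Nonempty.finsetSum fun j hj => hA j (hts hj)
  have hcd : #(∑ j ∈ s \ t, A j) + #(∑ j ∈ t, A j) - 1 ≤ #(∑ j ∈ s \ t, A j + ∑ j ∈ t, A j) :=
    cauchy_davenport_add_of_linearOrder_isCancelAdd
      (Nonempty.finsetSum fun j hj => hA j (sdiff_subset hj)) hsum
  have hsum_pos := hsum.card_pos
  omega

end CauchyDavenport

def arithProg (g k : ℕ) : Finset ℕ := (range (k + 1)).image (· * g)

theorem mem_arithProg {g k x : ℕ} : x ∈ arithProg g k ↔ ∃ i ≤ k, i * g = x := by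
  simp [arithProg]

theorem card_arithProg {g : ℕ} (hg : 0 < g) (k : ℕ) : #(arithProg g k) = k + 1 := by
  rw [arithProg, card_image_of_injective _ fun i j h => Nat.eq_of_mul_eq_mul_right hg h,
    card_range]

theorem arithProg_add_arithProg (g k l : ℕ) :
    arithProg g k + arithProg g l = arithProg g (k + l) := by
  ext x
  simp only [mem_add, mem_arithProg]
  constructor
  · rintro ⟨_, ⟨i, hi, rfl⟩, _, ⟨j, hj, rfl⟩, rfl⟩
    exact ⟨i + j, by omega, by ring⟩
  · rintro ⟨i, hi, rfl⟩
    exact ⟨min i k * g, ⟨_, min_le_right i k, rfl⟩, (i - min i k) * g, ⟨_, by omega, rfl⟩,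
      by rw [← add_mul, Nat.add_sub_of_le (min_le_left i k)]⟩

@[simp] theorem arithProg_zero (g : ℕ) : arithProg g 0 = 0 := by
  simp [arithProg, singleton_zero]

theorem arithProg_one (g : ℕ) : arithProg g 1 = {0, g} := by
  ext x
  simp only [mem_arithProg, mem_insert, mem_singleton, Nat.le_one_iff_eq_zero_or_eq_one]
  grind

theorem mul_mem_upperBounds_arithProg (g k : ℕ) :
    k * g ∈ upperBounds (arithProg g k : Set ℕ) := by
  rintro _ hx
  obtain ⟨i, hi, rfl⟩ := mem_arithProg.1 hx
  exact Nat.mul_le_mul_right g hi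

section NatSumset

variable {A B : Finset ℕ} {d e : ℕ}

theorem add_eq_union_singleton_add (hA : IsGreatest (A : Set ℕ) d) (h0B : 0 ∈ B)
    (h : #(A + B) + 1 ≤ #A + #B) : A + B = A ∪ ({d} + B) := by
  have hinter : A ∩ ({d} + B) ⊆ {d} := by
    intro x hx
    obtain ⟨hxA, hxB⟩ := mem_inter.1 hx
    obtain ⟨_, hd, b, -, rfl⟩ := mem_add.1 hxB
    rw [mem_singleton] at hd ⊢
    have := hA.2 hxA
    omega
  have hunion := card_union_add_card_inter A ({d} + B)
  have hinter_card := card_le_card hinter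
  rw [card_singleton_add] at hunion
  rw [card_singleton] at hinter_card
  exact (eq_of_subset_of_card_le (union_subset (subset_add_left A h0B)
    (add_subset_add_right (singleton_subset_iff.2 hA.1))) (by omega)).symm

theorem add_mem_of_card_add_le (hA : IsGreatest (A : Set ℕ) d) (h0B : 0 ∈ B) {g : ℕ} (hg : g ∈ B)
    (hgmin : ∀ b ∈ B, b < g → b = 0) (h : #(A + B) + 1 ≤ #A + #B) {a : ℕ} (ha : a ∈ A)
    (had : a < d) : a + g ∈ A := by
  have hmem : a + g ∈ A ∪ ({d} + B) := by
    rw [← add_eq_union_singleton_add hA h0B h]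
    exact add_mem_add ha hg
  rcases mem_union.1 hmem with hA' | hdB
  · exact hA'
  · obtain ⟨_, hd, b, hb, hab⟩ := mem_add.1 hdB
    rw [mem_singleton] at hd
    subst hd
    obtain rfl : b = 0 := hgmin b hb (by omega)
    rw [← hab, add_zero]
    exact hA.1

theorem eq_arithProg_of_add_mem (h0A : 0 ∈ A) (hA : IsGreatest (A : Set ℕ) d) {g : ℕ} (hg : 0 < g)
    (hcl : ∀ a ∈ A, a < d → a + g ∈ A) : g ∣ d ∧ A = arithProg g (d / g) := by
  have hmul : ∀ i, i * g ≤ d → i * g ∈ A := by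
    intro i
    induction i with
    | zero => simpa using h0A
    | succ i ih =>
      intro hi
      simpa [add_mul] using hcl _ (ih (by nlinarith)) (by nlinarith)
  have hgd : g ∣ d := by
    have hq := hmul (d / g) (Nat.div_mul_le_self d g)
    rcases (hA.2 hq).eq_or_lt with hq' | hq'
    · exact Dvd.intro_left _ hq'
    · have := hA.2 (hcl _ hq hq')
      have := Nat.lt_div_mul_add (a := d) hg
      omega
  have hdvd : ∀ a ∈ A, g ∣ a := by
    intro a ha
    induction hn : d - a using Nat.strong_induction_on generalizing a with
    | _ n ih =>
      rcases (hA.2 ha).eq_or_lt with rfl | had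
      · exact hgd
      · exact (Nat.dvd_add_left (dvd_refl g)).1 (ih _ (by omega) _ (hcl a ha had) rfl)
  refine ⟨hgd, ext fun a => ⟨fun ha => ?_, fun ha => ?_⟩⟩
  · obtain ⟨i, rfl⟩ := hdvd a ha
    exact mem_arithProg.2 ⟨i, (Nat.le_div_iff_mul_le hg).2 (by nlinarith [hA.2 ha]), mul_comm _ _⟩
  · obtain ⟨i, hi, rfl⟩ := mem_arithProg.1 ha
    exact hmul i ((Nat.mul_le_mul_right g hi).trans (Nat.div_mul_le_self d g))

theorem exists_least_pos (hA : IsGreatest (A : Set ℕ) d) (hd : 0 < d) :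
    ∃ g ∈ A, 0 < g ∧ ∀ a ∈ A, a < g → a = 0 := by
  obtain ⟨g, hg, hmin⟩ := (A.filter (0 < ·)).exists_min_image id ⟨d, mem_filter.2 ⟨hA.1, hd⟩⟩
  rw [mem_filter] at hg
  refine ⟨g, hg.1, hg.2, fun a ha hag => ?_⟩
  by_contra ha0
  exact (hmin a (mem_filter.2 ⟨ha, Nat.pos_of_ne_zero ha0⟩)).not_gt hag

theorem eq_arithProg_of_card_add_le (h0A : 0 ∈ A) (hA : IsGreatest (A : Set ℕ) d) (hd : 0 < d)
    (h0B : 0 ∈ B) (hB : IsGreatest (B : Set ℕ) e) (he : 0 < e) (h : #(A + B) + 1 ≤ #A + #B)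
    {g : ℕ} (hg : g ∈ A) (hg0 : 0 < g) (hgmin : ∀ a ∈ A, a < g → a = 0) :
    (g ∣ d ∧ A = arithProg g (d / g)) ∧ (g ∣ e ∧ B = arithProg g (e / g)) := by
  obtain ⟨g', hg', hg'0, hg'min⟩ := exists_least_pos hB he
  have h' : #(B + A) + 1 ≤ #B + #A := by rw [add_comm B A]; omega
  have hclA := fun a ha => add_mem_of_card_add_le hA h0B hg' hg'min h (a := a) ha
  have hclB := fun b hb => add_mem_of_card_add_le hB h0A hg hgmin h' (a := b) hb
  have hg'A : g' ∈ A := by simpa using hclA 0 h0A hd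
  have hgB : g ∈ B := by simpa using hclB 0 h0B he
  obtain rfl : g = g' := le_antisymm (not_lt.1 fun h'g => hg'0.ne' (hgmin g' hg'A h'g))
    (not_lt.1 fun hgg' => hg0.ne' (hg'min g hgB hgg'))
  exact ⟨eq_arithProg_of_add_mem h0A hA hg0 hclA, eq_arithProg_of_add_mem h0B hB hg0 hclB⟩

end NatSumset

theorem exists_arithProg_of_card_sum_le {ι : Type*} {s : Finset ι} {A : ι → Finset ℕ}
    {d : ι → ℕ} (hs : 1 < #s) (h0 : ∀ j ∈ s, 0 ∈ A j)
    (hA : ∀ j ∈ s, IsGreatest (A j : Set ℕ) (d j)) (hd : ∀ j ∈ s, 0 < d j)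
    (h : #(∑ j ∈ s, A j) + #s ≤ ∑ j ∈ s, #(A j) + 1) :
    ∃ g > 0, ∀ j ∈ s, g ∣ d j ∧ A j = arithProg g (d j / g) := by
  classical
  have hpair : ∀ i ∈ s, ∀ j ∈ s, i ≠ j → #(A i + A j) + 1 ≤ #(A i) + #(A j) := by
    intro i hi j hj hij
    have := card_sum_add_le_of_subset (fun k hk => ⟨0, h0 k hk⟩)
      (insert_subset hi (singleton_subset_iff.2 hj)) h
    rw [sum_pair hij, sum_pair hij, card_pair hij] at this
    omega
  obtain ⟨i, hi⟩ := card_pos.1 (by omega : 0 < #s)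
  obtain ⟨g, hg, hg0, hgmin⟩ := exists_least_pos (hA i hi) (hd i hi)
  have key : ∀ j ∈ s, j ≠ i → (g ∣ d i ∧ A i = arithProg g (d i / g)) ∧
      (g ∣ d j ∧ A j = arithProg g (d j / g)) := fun j hj hji =>
    eq_arithProg_of_card_add_le (h0 i hi) (hA i hi) (hd i hi) (h0 j hj) (hA j hj) (hd j hj)
      (hpair i hi j hj hji.symm) hg hg0 hgmin
  refine ⟨g, hg0, fun j hj => ?_⟩
  obtain rfl | hji := eq_or_ne j i
  · obtain ⟨k, hk, hki⟩ := exists_mem_ne hs j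
    exact (key k hk hki).1
  · exact (key j hj hji).2

section MonomialSpan

variable {σ : Type*}

theorem coeff_mul_of_mem_span_monomial {R : Type*} [CommSemiring R] {S : Set (σ →₀ ℕ)} {d : ℕ}
    (hS : ∀ v ∈ S, v.degree = d) {f : MvPolynomial σ R}
    (hf : f ∈ Ideal.span ((fun v => monomial v (1 : R)) '' S)) {u : σ →₀ ℕ} (hu : u.degree = d)
    (c : MvPolynomial σ R) : coeff u (c * f) = coeff 0 c * coeff u f := by
  classical
  rw [coeff_mul, sum_eq_single (0, u)]
  · rintro ⟨p, q⟩ hpq hne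
    rw [HasAntidiagonal.mem_antidiagonal] at hpq
    dsimp only at hpq
    by_cases hq : coeff q f = 0
    · rw [hq, mul_zero]
    obtain ⟨v, hv, hvq⟩ := mem_ideal_span_monomial_image.1 hf q (mem_support_iff.2 hq)
    have hp : p.degree = 0 := by
      have := Finsupp.degree_mono hvq
      rw [← hpq, map_add] at hu
      rw [hS v hv] at this
      omega
    obtain rfl := (Finsupp.degree_eq_zero_iff p).1 hp
    rw [zero_add] at hpq
    exact absurd (by rw [hpq]) hne
  · exact fun h => absurd (HasAntidiagonal.mem_antidiagonal.2 (zero_add u)) h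

variable {K : Type*} [Field K]

theorem card_le_card_of_span_eq_span_monomial {S : Finset (σ →₀ ℕ)} {d : ℕ}
    (hS : ∀ v ∈ S, v.degree = d) {t : Finset (MvPolynomial σ K)}
    (ht : Ideal.span (t : Set (MvPolynomial σ K)) =
      Ideal.span ((fun v => monomial v (1 : K)) '' S)) :
    #S ≤ #t := by
  classical
  let Φ : MvPolynomial σ K →ₗ[K] (S → K) := LinearMap.pi fun v => lcoeff K (v : σ →₀ ℕ)
  have hΦ : ∀ f ∈ Ideal.span (t : Set (MvPolynomial σ K)), Φ f ∈ Submodule.span K (Φ '' t) := by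
    intro f hf
    induction hf using Submodule.span_induction with
    | mem f hf => exact Submodule.subset_span ⟨f, hf, rfl⟩
    | zero => simp
    | add f g _ _ hf hg => rw [map_add]; exact add_mem hf hg
    | smul c f hfJ hf =>
      have : Φ (c • f) = coeff 0 c • Φ f := by
        ext v
        exact coeff_mul_of_mem_span_monomial hS (ht ▸ hfJ) (hS v v.2) c
      rw [this]
      exact Submodule.smul_mem _ _ hf
  have htop : Submodule.span K (Φ '' t) = ⊤ := by
    rw [eq_top_iff, ← (Pi.basisFun K S).span_eq, Submodule.span_le]
    rintro _ ⟨v, rfl⟩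
    have hv : monomial (v : σ →₀ ℕ) (1 : K) ∈ Ideal.span (t : Set (MvPolynomial σ K)) :=
      ht ▸ Ideal.subset_span ⟨v, v.2, rfl⟩
    have hΦv : Φ (monomial (v : σ →₀ ℕ) 1) = Pi.basisFun K S v := by
      ext w
      simp only [Φ, LinearMap.pi_apply, lcoeff_apply, coeff_monomial, Pi.basisFun_apply,
        Pi.single_apply, Subtype.ext_iff, eq_comm]
    rw [SetLike.mem_coe, ← hΦv]
    exact hΦ _ hv
  calc #S = (Φ '' t).finrank K := by rw [Set.finrank, htop, finrank_top]; simp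
    _ ≤ #(t.image Φ) := by simpa using finrank_span_finset_le_card (R := K) (t.image Φ)
    _ ≤ #t := card_image_le

theorem mu_span_monomial {S : Finset (σ →₀ ℕ)} {d : ℕ} (hS : ∀ v ∈ S, v.degree = d) :
    mu (Ideal.span ((fun v => monomial v (1 : K)) '' (S : Set (σ →₀ ℕ)))) = #S := by
  classical
  have hgen : Ideal.span ↑(S.image fun v => monomial v (1 : K)) =
      Ideal.span ((fun v => monomial v (1 : K)) '' (S : Set (σ →₀ ℕ))) := by rw [coe_image]
  have hcard : #(S.image fun v => monomial v (1 : K)) = #S :=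
    card_image_of_injective _ (monomial_left_injective one_ne_zero)
  refine le_antisymm (Nat.sInf_le ⟨_, hcard, hgen⟩) (le_csInf ⟨_, _, hcard, hgen⟩ ?_)
  rintro _ ⟨t, rfl, ht⟩
  exact card_le_card_of_span_eq_span_monomial hS ht

theorem span_monomial_mul_span_monomial {R : Type*} [CommSemiring R] (S T : Set (σ →₀ ℕ)) :
    Ideal.span ((fun v => monomial v (1 : R)) '' S) * Ideal.span ((fun v => monomial v 1) '' T) =
      Ideal.span ((fun v => monomial v 1) '' (S + T)) := by
  rw [Ideal.span_mul_span', ← Set.image2_mul, Set.image2_image_left, Set.image2_image_right,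
    ← Set.image2_add, Set.image_image2]
  simp [monomial_mul]

end MonomialSpan

section TwoVariables

variable {K : Type*} [Field K]

noncomputable def xyExp (d a : ℕ) : Fin 2 →₀ ℕ := Finsupp.single 0 a + Finsupp.single 1 (d - a)

@[simp] theorem xyExp_apply_zero (d a : ℕ) : xyExp d a 0 = a := by simp [xyExp]

@[simp] theorem xyExp_apply_one (d a : ℕ) : xyExp d a 1 = d - a := by simp [xyExp]

theorem degree_xyExp {d a : ℕ} (ha : a ≤ d) : (xyExp d a).degree = d := by
  rw [xyExp, map_add, Finsupp.degree_single, Finsupp.degree_single]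
  omega

theorem xyExp_injective (d : ℕ) : Function.Injective (xyExp d) := fun a b h => by
  simpa using DFunLike.congr_fun h 0

theorem xyExp_apply_zero_eq {v : Fin 2 →₀ ℕ} {d : ℕ} (hv : v.degree = d) : xyExp d (v 0) = v := by
  rw [Finsupp.degree_eq_sum, Fin.sum_univ_two] at hv
  ext i
  fin_cases i
  · simp
  · simp
    omega

theorem xyExp_add_xyExp {d e a b : ℕ} (ha : a ≤ d) (hb : b ≤ e) :
    xyExp d a + xyExp e b = xyExp (d + e) (a + b) := by
  ext i
  fin_cases i
  · simp
  · simp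
    omega

variable (K) in
/-- The ideal `(x^a y^(d-a) : a ∈ A)` of `K[x,y]`. -/
noncomputable def xyIdeal (d : ℕ) (A : Finset ℕ) : Ideal (MvPolynomial (Fin 2) K) :=
  Ideal.span ((fun v => monomial v (1 : K)) '' ↑(A.image (xyExp d)))

theorem mu_xyIdeal {d : ℕ} {A : Finset ℕ} (hA : d ∈ upperBounds (A : Set ℕ)) :
    mu (xyIdeal K d A) = #A := by
  rw [xyIdeal, mu_span_monomial (d := d), card_image_of_injective _ (xyExp_injective d)]
  simp only [mem_image, forall_exists_index, and_imp, forall_apply_eq_imp_iff₂]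
  exact fun a ha => degree_xyExp (hA ha)

theorem xyIdeal_mul {d e : ℕ} {A B : Finset ℕ} (hA : d ∈ upperBounds (A : Set ℕ))
    (hB : e ∈ upperBounds (B : Set ℕ)) :
    xyIdeal K d A * xyIdeal K e B = xyIdeal K (d + e) (A + B) := by
  classical
  rw [xyIdeal, xyIdeal, xyIdeal, span_monomial_mul_span_monomial, ← Finset.coe_add]
  congr 3
  ext v
  simp only [mem_add, mem_image]
  constructor
  · rintro ⟨_, ⟨a, ha, rfl⟩, _, ⟨b, hb, rfl⟩, rfl⟩
    exact ⟨a + b, ⟨a, ha, b, hb, rfl⟩, (xyExp_add_xyExp (hA ha) (hB hb)).symm⟩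
  · rintro ⟨_, ⟨a, ha, b, hb, rfl⟩, rfl⟩
    exact ⟨_, ⟨a, ha, rfl⟩, _, ⟨b, hb, rfl⟩, xyExp_add_xyExp (hA ha) (hB hb)⟩

theorem xyIdeal_zero_zero : xyIdeal K 0 0 = ⊤ := by
  have : xyExp 0 0 = 0 := by simp [xyExp]
  rw [xyIdeal, ← singleton_zero, image_singleton, coe_singleton, Set.image_singleton, this,
    monomial_zero', C_1, Ideal.span_singleton_one]

theorem prod_xyIdeal {ι : Type*} {s : Finset ι} {A : ι → Finset ℕ} {d : ι → ℕ}
    (h : ∀ j ∈ s, d j ∈ upperBounds (A j : Set ℕ)) :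
    ∏ j ∈ s, xyIdeal K (d j) (A j) = xyIdeal K (∑ j ∈ s, d j) (∑ j ∈ s, A j) := by
  induction s using Finset.cons_induction with
  | empty => simp [← Ideal.one_eq_top, xyIdeal_zero_zero]
  | cons i s hi ih =>
    have hs : ∀ j ∈ s, d j ∈ upperBounds (A j : Set ℕ) := fun j hj => h j (mem_cons_of_mem hj)
    rw [prod_cons, sum_cons, sum_cons, ih hs, xyIdeal_mul (h i (mem_cons_self i s))]
    rw [coe_sum]
    exact sum_mem_upperBounds_sum hs


theorem span_X_pow_eq_xyIdeal (a : ℕ) :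
    Ideal.span {X 0 ^ a, X 1 ^ a} = xyIdeal K a (arithProg a 1) := by
  have h1 : xyExp a a = Finsupp.single 0 a := by simp [xyExp]
  have h0 : xyExp a 0 = Finsupp.single 1 a := by simp [xyExp]
  rw [xyIdeal, arithProg_one, image_insert, image_singleton, h1, h0, coe_pair, Set.image_pair,
    X_pow_eq_monomial, X_pow_eq_monomial, Set.pair_comm]

theorem span_X_pow_pow_eq_xyIdeal (a s : ℕ) :
    Ideal.span {X 0 ^ a, X 1 ^ a} ^ s = xyIdeal K (s * a) (arithProg a s) := by
  induction s with
  | zero => simp [← Ideal.one_eq_top, xyIdeal_zero_zero]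
  | succ s ih =>
    have h1 := mul_mem_upperBounds_arithProg a 1
    rw [one_mul] at h1
    rw [pow_succ, ih, span_X_pow_eq_xyIdeal, xyIdeal_mul (mul_mem_upperBounds_arithProg a s) h1,
      arithProg_add_arithProg, add_mul, one_mul]

theorem mu_span_X_pow_pow {a : ℕ} (ha : 0 < a) (s : ℕ) :
    mu (Ideal.span {X 0 ^ a, X 1 ^ a} ^ s : Ideal (MvPolynomial (Fin 2) K)) = s + 1 := by
  rw [span_X_pow_pow_eq_xyIdeal, mu_xyIdeal (mul_mem_upperBounds_arithProg a s), card_arithProg ha]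

theorem exists_eq_xyIdeal {I : Ideal (MvPolynomial (Fin 2) K)}
    (hI : IsEquigenMonomialIdeal I) (hht : HasHeightTwo I) :
    ∃ (d : ℕ) (A : Finset ℕ), 0 ∈ A ∧ IsGreatest (A : Set ℕ) d ∧ 0 < d ∧ I = xyIdeal K d A := by
  obtain ⟨d, S, -, hdeg, rfl⟩ := hI
  obtain ⟨hne, k, l, -, -, hx, hy⟩ := hht
  have hdeg' : ∀ v ∈ S, v.degree = d := by simpa [Finsupp.degree_eq_sum] using hdeg
  set A := ((Finsupp.finite_of_degree_eq d).subset hdeg').toFinset.image (· 0) with hAdef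
  have hmemA : ∀ a, a ∈ A ↔ ∃ v ∈ S, v 0 = a := by simp [hAdef]
  have hS : ↑(A.image (xyExp d)) = S := by
    ext v
    simp only [coe_image, Set.mem_image, mem_coe, hmemA]
    constructor
    · rintro ⟨_, ⟨w, hw, rfl⟩, rfl⟩
      rwa [xyExp_apply_zero_eq (hdeg' w hw)]
    · exact fun hv => ⟨v 0, ⟨v, hv, rfl⟩, xyExp_apply_zero_eq (hdeg' v hv)⟩
  rw [X_pow_eq_monomial, mem_ideal_span_monomial_image] at hx hy
  obtain ⟨v, hv, hvx⟩ := hx (Finsupp.single 0 k) (by simp)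
  obtain ⟨w, hw, hwy⟩ := hy (Finsupp.single 1 l) (by simp)
  have hv1 : v 1 = 0 := by simpa using hvx 1
  have hw0 : w 0 = 0 := by simpa using hwy 0
  have hvd : v 0 = d := by
    rw [← hdeg' v hv, Finsupp.degree_eq_sum, Fin.sum_univ_two, hv1, add_zero]
  refine ⟨d, A, (hmemA 0).2 ⟨w, hw, hw0⟩, ⟨(hmemA d).2 ⟨v, hv, hvd⟩, ?_⟩, ?_, by rw [xyIdeal, hS]⟩
  · rintro _ ha
    obtain ⟨u, hu, rfl⟩ := (hmemA _).1 ha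
    exact (Finsupp.le_degree 0 u).trans (hdeg' u hu).le
  · refine Nat.pos_of_ne_zero fun hd0 => hne ((Ideal.eq_top_iff_one _).2 ?_)
    obtain rfl : w = 0 := (Finsupp.degree_eq_zero_iff w).1 (hd0 ▸ hdeg' w hw)
    simpa using Ideal.subset_span (Set.mem_image_of_mem (fun v => monomial v (1 : K)) hw)

end TwoVariables

/-- Corollary 3.3: for equigenerated monomial ideals `I₁,…,I_r ⊂ K[x,y]` of height 2 one has
`μ(I₁ ⋯ I_r) ≥ Σ μ(I_j) - (r-1)`, with equality iff `r = 1`, or `r > 1` and there are positive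
integers `a` and `s₁,…,s_r` with `I_j = (xᵃ,yᵃ)^{s_j}` for all `j`. -/
theorem numGen_prod_ge_and_eq_iff {K : Type*} [Field K] {r : ℕ} (hr : 0 < r)
    (I : Fin r → Ideal (MvPolynomial (Fin 2) K))
    (heq : ∀ j, IsEquigenMonomialIdeal (I j)) (hht : ∀ j, HasHeightTwo (I j)) :
    (∑ j, mu (I j)) - (r - 1) ≤ mu (∏ j, I j) ∧
    (mu (∏ j, I j) = (∑ j, mu (I j)) - (r - 1) ↔
      r = 1 ∨ (1 < r ∧ ∃ a : ℕ, 0 < a ∧ ∃ s : Fin r → ℕ, ∀ j, 0 < s j ∧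
        I j = (Ideal.span {X 0 ^ a, X 1 ^ a} : Ideal (MvPolynomial (Fin 2) K)) ^ (s j))) := by
  choose d A h0 hA hd hI using fun j => exists_eq_xyIdeal (heq j) (hht j)
  have hmu : ∀ j, mu (I j) = #(A j) := fun j => by rw [hI j, mu_xyIdeal (hA j).2]
  have hmu_prod : mu (∏ j, I j) = #(∑ j, A j) := by
    rw [prod_congr rfl fun j _ => hI j, prod_xyIdeal fun j _ => (hA j).2, mu_xyIdeal]
    simpa only [coe_sum] using sum_mem_upperBounds_sum fun j _ => (hA j).2
  have hCD : ∑ j, #(A j) + 1 ≤ #(∑ j, A j) + r := by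
    simpa using card_sum_add_le (s := univ) fun j _ => ⟨0, h0 j⟩
  simp only [hmu, hmu_prod]
  refine ⟨by omega, fun htight => ?_, ?_⟩
  · obtain rfl | hr1 := Nat.eq_or_lt_of_le hr
    · exact Or.inl rfl
    have hpos := (Nonempty.finsetSum (s := univ) fun j _ => ⟨0, h0 j⟩).card_pos
    obtain ⟨g, hg, hAg⟩ := exists_arithProg_of_card_sum_le (s := univ) (by simpa using hr1)
      (fun j _ => h0 j) (fun j _ => hA j) (fun j _ => hd j)
      (by rw [card_univ, Fintype.card_fin]; omega)
    refine Or.inr ⟨hr1, g, hg, fun j => d j / g, fun j => ⟨?_, ?_⟩⟩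
    · obtain ⟨hgd, -⟩ := hAg j (mem_univ j)
      exact Nat.div_pos (Nat.le_of_dvd (hd j) hgd) hg
    · obtain ⟨hgd, hAj⟩ := hAg j (mem_univ j)
      rw [hI j, span_X_pow_pow_eq_xyIdeal, Nat.div_mul_cancel hgd, hAj]
  · rintro (rfl | ⟨-, a, ha, s, hs⟩)
    · simp
    · have hs_card : ∀ j, #(A j) = s j + 1 := fun j => by
        rw [← hmu, (hs j).2, mu_span_X_pow_pow ha]
      rw [← hmu_prod, prod_congr rfl fun j _ => (hs j).2, prod_pow_eq_pow_sum,
        mu_span_X_pow_pow ha, sum_congr rfl fun j _ => hs_card j, sum_add_distrib, sum_const,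
        card_univ, Fintype.card_fin, smul_eq_mul, mul_one]
      omega
end

section
/- Let K be a field and let I ⊂ K[x,y] be an equigenerated monomial ideal of height 2 with μ(I) = m. Then (a) μ(I^k) ≥ k(m−1) + 1 for all k ≥ 1, and (b) the following are equivalent: (i) μ(I^k) = k(m−1) + 1 for some k ≥ 2; (ii) μ(I^k) = k(m−1) + 1 for all k ≥ 2; (iii) there exist positive integers a and r such that I = (x^a, y^a)^r. -/
open MvPolynomial

/-!
Writing the generators of `I` as `xᵃ y^(d-a)` for `a` in a set `A ⊆ [0, d]` containing `0` and `d`,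
the generators of `I^k` are the `xᵇ y^(kd-b)` with `b ∈ k • A`, and a degree-`kd` component
argument shows that `μ(I^k) = #(k • A)`. Part (a) is then the Cauchy–Davenport bound
`#(B + A) ≥ #B + #A - 1` in `ℕ`, iterated. If equality holds for some `k ≥ 2`, the iterated bound
forces `#(2 • A) = 2 #A - 1`, and comparing two increasing chains of `2 #A - 1` sums
`aᵢ + aⱼ` shows that `A` is an arithmetic progression `{0, δ, …, rδ}` with `rδ = d`, i.e.
`I = (x^δ, y^δ)^r`. Conversely `μ((x^δ, y^δ)^j) = j + 1`.
-/

open Finset Pointwise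

section AdditiveCombinatorics

variable {α : Type*} [LinearOrder α] [AddCommMonoid α] [IsOrderedCancelAddMonoid α]

theorem card_nsmul_add_mul_le {A : Finset α} (hA : A.Nonempty) (k j : ℕ) :
    #(k • A) + j * (#A - 1) ≤ #((k + j) • A) := by
  induction j with
  | zero => simp
  | succ j ih =>
    have h : #((k + j) • A) + #A - 1 ≤ #((k + j) • A + A) :=
      cauchy_davenport_add_of_linearOrder_isCancelAdd hA.nsmul hA
    rw [← add_assoc, succ_nsmul, Nat.succ_mul]
    have : 1 ≤ #A := hA.card_pos
    omega

theorem mul_card_sub_one_add_one_le_card_nsmul {A : Finset α} (hA : A.Nonempty) (k : ℕ) :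
    k * (#A - 1) + 1 ≤ #(k • A) := by
  simpa [add_comm] using card_nsmul_add_mul_le hA 0 k

theorem card_two_nsmul_eq_of_card_nsmul_eq {A : Finset α} (hA : A.Nonempty) {k : ℕ} (hk : 2 ≤ k)
    (h : #(k • A) = k * (#A - 1) + 1) : #(2 • A) = 2 * (#A - 1) + 1 := by
  have hupper := card_nsmul_add_mul_le hA 2 (k - 2)
  have hlower := mul_card_sub_one_add_one_le_card_nsmul hA 2
  have hk' : k * (#A - 1) = 2 * (#A - 1) + (k - 2) * (#A - 1) := by
    rw [← add_mul, Nat.add_sub_cancel' hk]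
  rw [Nat.add_sub_cancel' hk] at hupper
  omega

/-- With `A = {a₀ < ⋯ < aₙ}`, both `a₀ + a₀ < ⋯ < a₀ + aₙ < a₁ + aₙ < ⋯ < aₙ + aₙ` and
`a₀ + a₀ < a₀ + a₁ < a₁ + a₁ < a₁ + a₂ < ⋯ < aₙ + aₙ` are chains of `2n + 1` sums in `2 • A`,
so when `#(2 • A) = 2n + 1` they agree term by term. -/
theorem orderEmbOfFin_add_orderEmbOfFin_zero_of_card_two_nsmul {A : Finset α} {n : ℕ}
    (hn : #A = n + 1) (h2A : #(2 • A) = 2 * n + 1) {j : ℕ} (hj : j ≤ n) :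
    A.orderEmbOfFin hn ⟨j, by omega⟩ + A.orderEmbOfFin hn 0 =
      A.orderEmbOfFin hn ⟨j / 2, by omega⟩ + A.orderEmbOfFin hn ⟨(j + 1) / 2, by omega⟩ := by
  set a := A.orderEmbOfFin hn
  have hlt : ∀ {p q p' q' : ℕ} (hp : p ≤ p') (hq : q ≤ q') (hp' : p' ≤ n) (hq' : q' ≤ n),
      p + q < p' + q' →
        a ⟨p, by omega⟩ + a ⟨q, by omega⟩ < a ⟨p', by omega⟩ + a ⟨q', by omega⟩ := by
    intro p q p' q' hp hq _ _ h
    rcases hp.lt_or_eq with hp | rfl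
    · exact add_lt_add_of_lt_of_le (a.strictMono hp) (a.monotone hq)
    · exact add_lt_add_of_le_of_lt le_rfl (a.strictMono (Fin.mk_lt_mk.mpr (by omega)))
  have hmem : ∀ p q, a p + a q ∈ 2 • A := fun p q => by
    rw [two_nsmul]; exact add_mem_add (A.orderEmbOfFin_mem hn p) (A.orderEmbOfFin_mem hn q)
  have hc := orderEmbOfFin_unique h2A
    (f := fun i => a ⟨min i n, by omega⟩ + a ⟨i - n, by omega⟩) (fun i => hmem _ _)
    (fun i i' h => hlt (by omega) (by omega) (by omega) (by omega) (by omega))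
  have hd := orderEmbOfFin_unique h2A
    (f := fun i => a ⟨i / 2, by omega⟩ + a ⟨(i + 1) / 2, by omega⟩) (fun i => hmem _ _)
    (fun i i' h => hlt (by omega) (by omega) (by omega) (by omega) (by omega))
  have := congrFun (hc.trans hd.symm) ⟨j, by omega⟩
  simp only [min_eq_left hj, Nat.sub_eq_zero_of_le hj] at this
  exact this

end AdditiveCombinatorics

theorem exists_eq_image_mul_range_of_card_two_nsmul {A : Finset ℕ} (h0 : 0 ∈ A) (hA : 1 < #A)
    (h2A : #(2 • A) = 2 * (#A - 1) + 1) : ∃ δ, A = (range #A).image (· * δ) := by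
  obtain ⟨n, hn⟩ : ∃ n, #A = n + 1 := ⟨#A - 1, by omega⟩
  set a := A.orderEmbOfFin hn
  have ha0 : a 0 = 0 := by
    have : a 0 ≤ 0 := by
      obtain ⟨i, hi⟩ : 0 ∈ Set.range a := by rwa [A.range_orderEmbOfFin]
      exact (a.monotone (Fin.zero_le i)).trans hi.le
    omega
  have hlin : ∀ j (hj : j ≤ n), a ⟨j, by omega⟩ = j * a ⟨1, by omega⟩ := by
    intro j
    induction j using Nat.strong_induction_on with
    | _ j ih =>
      intro hj
      match j, hj with
      | 0, _ => simpa using ha0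
      | 1, _ => simp
      | j + 2, hj =>
        have := orderEmbOfFin_add_orderEmbOfFin_zero_of_card_two_nsmul hn (by omega) hj
        rw [ha0, ih ((j + 2) / 2) (by omega) (by omega), ih ((j + 2 + 1) / 2) (by omega) (by omega),
          ← Nat.add_mul, show (j + 2) / 2 + (j + 2 + 1) / 2 = j + 2 by omega] at this
        simpa using this
  refine ⟨a ⟨1, by omega⟩, ?_⟩
  ext x
  constructor
  · intro hx
    obtain ⟨i, rfl⟩ : x ∈ Set.range a := by rwa [A.range_orderEmbOfFin]
    exact mem_image.mpr ⟨i, by simp; omega, (hlin i (by omega)).symm⟩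
  · intro hx
    obtain ⟨j, hj, rfl⟩ := mem_image.mp hx
    rw [← hlin j (by simp at hj; omega)]
    exact A.orderEmbOfFin_mem hn _

theorem nsmul_pair_zero_one (k : ℕ) : k • ({0, 1} : Finset ℕ) = range (k + 1) := by
  induction k with
  | zero => rfl
  | succ k ih =>
    ext x
    rw [succ_nsmul, ih, mem_add]
    simp only [mem_range, mem_insert, mem_singleton]
    constructor
    · rintro ⟨y, hy, z, rfl | rfl, rfl⟩ <;> omega
    · intro hx
      rcases Nat.lt_or_ge x (k + 1) with h | h
      · exact ⟨x, h, 0, Or.inl rfl, rfl⟩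
      · exact ⟨k, by omega, 1, Or.inr rfl, by omega⟩

theorem nsmul_pair_zero (k δ : ℕ) : k • ({0, δ} : Finset ℕ) = (range (k + 1)).image (· * δ) := by
  have h := image_nsmul (AddMonoidHom.mulRight δ) ({0, 1} : Finset ℕ) k
  rw [nsmul_pair_zero_one] at h
  simpa using h.symm

theorem mu_span_le_card {R : Type*} [CommRing R] (s : Finset R) :
    mu (Ideal.span (s : Set R)) ≤ #s :=
  Nat.sInf_le ⟨s, rfl, rfl⟩

theorem le_mu {R : Type*} [CommRing R] {I : Ideal R} (hI : I.FG) {n : ℕ}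
    (h : ∀ s : Finset R, Ideal.span (s : Set R) = I → n ≤ #s) : n ≤ mu I := by
  obtain ⟨s, hs⟩ := hI
  exact le_csInf ⟨_, s, rfl, hs⟩ fun _ ⟨t, ht, hspan⟩ => ht ▸ h t hspan

section MonomialIdeal

variable {σ K : Type*} [Field K]

variable (K) in
noncomputable def monomialIdeal (S : Set (σ →₀ ℕ)) : Ideal (MvPolynomial σ K) :=
  Ideal.span ((fun v => monomial v 1) '' S)

theorem monomialIdeal_pow (S : Set (σ →₀ ℕ)) (k : ℕ) :
    monomialIdeal K S ^ k = monomialIdeal K (k • S) := by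
  induction k with
  | zero => simp [monomialIdeal, Ideal.one_eq_top]
  | succ k ih =>
    rw [pow_succ, ih, monomialIdeal, monomialIdeal, Ideal.span_mul_span', succ_nsmul, monomialIdeal]
    congr 1
    ext x
    simp only [Set.mem_mul, Set.mem_add, Set.mem_image]
    constructor
    · rintro ⟨_, ⟨u, hu, rfl⟩, _, ⟨v, hv, rfl⟩, rfl⟩
      exact ⟨u + v, ⟨u, hu, v, hv, rfl⟩, by rw [monomial_mul, one_mul]⟩
    · rintro ⟨_, ⟨u, hu, v, hv, rfl⟩, rfl⟩
      exact ⟨_, ⟨u, hu, rfl⟩, _, ⟨v, hv, rfl⟩, by rw [monomial_mul, one_mul]⟩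

theorem le_degree_of_mem_monomialIdeal {S : Set (σ →₀ ℕ)} {D : ℕ} (hS : ∀ v ∈ S, v.degree = D)
    {q : MvPolynomial σ K} (hq : q ∈ monomialIdeal K S) {w : σ →₀ ℕ} (hw : w ∈ q.support) :
    D ≤ w.degree := by
  obtain ⟨v, hv, hle⟩ := mem_ideal_span_monomial_image.mp hq w hw
  exact hS v hv ▸ Finsupp.degree_mono hle

theorem homogeneousComponent_mul_of_le_degree {R : Type*} [CommSemiring R] {D : ℕ}
    {p q : MvPolynomial σ R} (hq : ∀ w ∈ q.support, D ≤ w.degree) :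
    homogeneousComponent D (p * q) = p.coeff 0 • homogeneousComponent D q := by
  classical
  ext w
  rw [smul_eq_C_mul, coeff_homogeneousComponent, coeff_C_mul, coeff_homogeneousComponent]
  split_ifs with hw
  · rw [coeff_mul, sum_eq_single (0, w)]
    · rintro ⟨u, v⟩ huv hne
      by_cases hv : v ∈ q.support
      · have huv : u + v = w := mem_antidiagonal.mp huv
        have hu : u = 0 := by
          have := hq v hv
          rw [← Finsupp.degree_eq_zero_iff]
          have := congrArg Finsupp.degree huv
          rw [map_add] at this
          omega
        simp [hu, ← huv] at hne
      · simp [notMem_support_iff.mp hv]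
    · simp
  · simp

/-- The degree-`D` components of any generating set span a `K`-space containing the `#S`
independent monomials. -/
theorem card_le_card_of_span_eq_monomialIdeal {S : Finset (σ →₀ ℕ)} {D : ℕ}
    (hS : ∀ v ∈ S, v.degree = D) {s : Finset (MvPolynomial σ K)}
    (hs : Ideal.span (s : Set _) = monomialIdeal K (S : Set (σ →₀ ℕ))) : #S ≤ #s := by
  classical
  set W := Submodule.span K (s.image (homogeneousComponent D) : Set (MvPolynomial σ K))
  have hmem : ∀ v ∈ S, monomial v (1 : K) ∈ W := by
    intro v hv
    have : monomial v (1 : K) ∈ Ideal.span (s : Set _) := hs ▸ Ideal.subset_span ⟨v, hv, rfl⟩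
    obtain ⟨f, -, hf⟩ := Submodule.mem_span_finset.mp this
    rw [← homogeneousComponent_eq_self (isHomogeneous_monomial _ (hS v hv)), ← hf, map_sum]
    refine Submodule.sum_mem _ fun i hi => ?_
    rw [smul_eq_mul, homogeneousComponent_mul_of_le_degree fun w hw =>
      le_degree_of_mem_monomialIdeal hS (hs ▸ Ideal.subset_span hi) hw]
    exact Submodule.smul_mem _ _ (Submodule.subset_span (mem_image_of_mem _ hi))
  have hli : LinearIndependent K (fun v : S => (⟨monomial v (1 : K), hmem v v.2⟩ : W)) := by
    apply LinearIndependent.of_comp W.subtype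
    have := (basisMonomials σ K).linearIndependent.comp ((↑) : S → σ →₀ ℕ) Subtype.val_injective
    rwa [coe_basisMonomials] at this
  calc #S = Fintype.card S := (Fintype.card_coe S).symm
    _ ≤ Module.finrank K W := hli.fintype_card_le_finrank
    _ ≤ #(s.image (homogeneousComponent D)) := finrank_span_finset_le_card _
    _ ≤ #s := card_image_le

theorem mu_monomialIdeal {S : Finset (σ →₀ ℕ)} {D : ℕ} (hS : ∀ v ∈ S, v.degree = D) :
    mu (monomialIdeal K (S : Set (σ →₀ ℕ))) = #S := by
  classical
  have hspan : Ideal.span ↑(S.image fun v => monomial v (1 : K)) =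
      monomialIdeal K (S : Set (σ →₀ ℕ)) := by
    rw [coe_image]; rfl
  have hcard : #(S.image fun v => monomial v (1 : K)) = #S :=
    card_image_of_injective _ (monomial_left_injective one_ne_zero)
  exact le_antisymm (hspan ▸ hcard ▸ mu_span_le_card _)
    (le_mu ⟨_, hspan⟩ fun s hs => card_le_card_of_span_eq_monomialIdeal hS hs)

theorem degree_eq_of_mem_nsmul [DecidableEq σ] {S : Finset (σ →₀ ℕ)} {d : ℕ}
    (hS : ∀ v ∈ S, v.degree = d) {k : ℕ} {v : σ →₀ ℕ} (hv : v ∈ k • S) : v.degree = k * d := by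
  induction k generalizing v with
  | zero => simp_all
  | succ k ih =>
    obtain ⟨u, hu, w, hw, rfl⟩ := mem_add.mp (succ_nsmul S k ▸ hv)
    rw [map_add, ih hu, hS w hw, Nat.succ_mul]

theorem exists_le_single_of_X_pow_mem {S : Set (σ →₀ ℕ)} {i : σ} {k : ℕ}
    (h : (X i : MvPolynomial σ K) ^ k ∈ monomialIdeal K S) :
    ∃ v ∈ S, v ≤ Finsupp.single i k := by
  classical
  rw [X_pow_eq_monomial] at h
  exact mem_ideal_span_monomial_image.mp h _ (by simp [support_monomial])

theorem IsEquigenMonomialIdeal.exists_eq_monomialIdeal {n : ℕ}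
    {I : Ideal (MvPolynomial (Fin n) K)} (h : IsEquigenMonomialIdeal I) :
    ∃ (d : ℕ) (S : Finset (Fin n →₀ ℕ)), (∀ v ∈ S, v.degree = d) ∧
      I = monomialIdeal K (S : Set (Fin n →₀ ℕ)) := by
  obtain ⟨d, S, -, hS, rfl⟩ := h
  have hSd : ∀ v ∈ S, v.degree = d := fun v hv => by rw [Finsupp.degree_eq_sum, hS v hv]
  have hfin : S.Finite := (Finsupp.finite_of_degree_eq d).subset hSd
  exact ⟨d, hfin.toFinset, fun v hv => hSd v (hfin.mem_toFinset.mp hv), by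
    rw [hfin.coe_toFinset]; rfl⟩

end MonomialIdeal

section TwoVariables

variable {K : Type*} [Field K]

theorem Finsupp.degree_fin_two (v : Fin 2 →₀ ℕ) : v.degree = v 0 + v 1 := by
  rw [Finsupp.degree_eq_sum, Fin.sum_univ_two]

theorem injOn_apply_zero_of_degree_eq (d : ℕ) :
    Set.InjOn (fun v : Fin 2 →₀ ℕ => v 0) {v | v.degree = d} := by
  intro v (hv : v.degree = d) w (hw : w.degree = d) (h : v 0 = w 0)
  rw [Finsupp.degree_fin_two] at hv hw
  ext i
  fin_cases i <;> simp <;> omega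

theorem image_apply_zero_nsmul (S : Finset (Fin 2 →₀ ℕ)) (k : ℕ) :
    (k • S).image (· 0) = k • S.image (· 0) :=
  image_nsmul (Finsupp.applyAddHom 0) S k

theorem eq_of_image_apply_zero_eq {S S' : Finset (Fin 2 →₀ ℕ)} {d : ℕ}
    (hS : ∀ v ∈ S, v.degree = d) (hS' : ∀ v ∈ S', v.degree = d)
    (h : S.image (· 0) = S'.image (· 0)) : S = S' := by
  refine (image_eq_image_iff_of_injOn ((injOn_apply_zero_of_degree_eq d).mono ?_)
    subset_union_left subset_union_right).mp h
  intro v hv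
  rcases mem_union.mp hv with hv | hv
  exacts [hS v hv, hS' v hv]

theorem mu_monomialIdeal_pow {S : Finset (Fin 2 →₀ ℕ)} {d : ℕ} (hS : ∀ v ∈ S, v.degree = d)
    (k : ℕ) : mu (monomialIdeal K (S : Set (Fin 2 →₀ ℕ)) ^ k) = #(k • S.image (· 0)) := by
  rw [monomialIdeal_pow, ← coe_nsmul, mu_monomialIdeal fun v => degree_eq_of_mem_nsmul hS,
    ← image_apply_zero_nsmul]
  exact (card_image_of_injOn fun v hv w hw => injOn_apply_zero_of_degree_eq (k * d)
    (degree_eq_of_mem_nsmul hS hv) (degree_eq_of_mem_nsmul hS hw)).symm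

theorem HasHeightTwo.pos_and_mem_image {S : Finset (Fin 2 →₀ ℕ)} {d : ℕ}
    (h : HasHeightTwo (monomialIdeal K (S : Set (Fin 2 →₀ ℕ)))) (hS : ∀ v ∈ S, v.degree = d) :
    0 < d ∧ 0 ∈ S.image (· 0) ∧ d ∈ S.image (· 0) := by
  obtain ⟨hne, k, l, -, -, hx, hy⟩ := h
  obtain ⟨v, hv, hvx⟩ := exists_le_single_of_X_pow_mem hx
  obtain ⟨w, hw, hwy⟩ := exists_le_single_of_X_pow_mem hy
  have hv1 : v 1 = 0 := by simpa using hvx 1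
  have hw0 : w 0 = 0 := by simpa using hwy 0
  have hvd := hS v hv
  have hwd := hS w hw
  rw [Finsupp.degree_fin_two] at hvd hwd
  refine ⟨Nat.pos_of_ne_zero fun hd => hne ?_, mem_image.mpr ⟨w, hw, hw0⟩,
    mem_image.mpr ⟨v, hv, by omega⟩⟩
  have hw0 : w = 0 := by ext i; fin_cases i <;> simp <;> omega
  have : monomial w (1 : K) ∈ monomialIdeal K ↑S := Ideal.subset_span ⟨w, hw, rfl⟩
  rwa [hw0, monomial_zero', C_1, ← Ideal.eq_top_iff_one] at this

theorem span_X_pow_pair_eq (a : ℕ) :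
    (Ideal.span {X 0 ^ a, X 1 ^ a} : Ideal (MvPolynomial (Fin 2) K)) =
      monomialIdeal K ↑({Finsupp.single 0 a, Finsupp.single 1 a} : Finset (Fin 2 →₀ ℕ)) := by
  simp [monomialIdeal, Set.image_pair, X_pow_eq_monomial]

theorem image_apply_zero_pair_single (a : ℕ) :
    ({Finsupp.single 0 a, Finsupp.single 1 a} : Finset (Fin 2 →₀ ℕ)).image (· 0) = {0, a} := by
  simp [Finset.pair_comm]

theorem mu_span_X_pow_pair_pow {a : ℕ} (ha : 0 < a) (j : ℕ) :
    mu ((Ideal.span {X 0 ^ a, X 1 ^ a} : Ideal (MvPolynomial (Fin 2) K)) ^ j) = j + 1 := by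
  rw [span_X_pow_pair_eq, mu_monomialIdeal_pow (d := a) (by simp), image_apply_zero_pair_single,
    nsmul_pair_zero, card_image_of_injective _ (mul_left_injective₀ ha.ne'), card_range]

theorem exists_monomialIdeal_eq_span_X_pow_pair_pow {S : Finset (Fin 2 →₀ ℕ)} {d : ℕ}
    (hS : ∀ v ∈ S, v.degree = d) (hd : 0 < d) (h0 : 0 ∈ S.image (· 0))
    (hdA : d ∈ S.image (· 0)) (h2 : #(2 • S.image (· 0)) = 2 * (#(S.image (· 0)) - 1) + 1) :
    ∃ a r : ℕ, 0 < a ∧ 0 < r ∧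
      monomialIdeal K (S : Set (Fin 2 →₀ ℕ)) = Ideal.span {X 0 ^ a, X 1 ^ a} ^ r := by
  set A := S.image (· 0)
  obtain ⟨δ, hδ⟩ := exists_eq_image_mul_range_of_card_two_nsmul h0
    (one_lt_card.mpr ⟨0, h0, d, hdA, hd.ne⟩) h2
  obtain ⟨r, hr⟩ : ∃ r, #A = r + 1 := ⟨#A - 1, (Nat.sub_add_cancel (card_pos.mpr ⟨0, h0⟩)).symm⟩
  rw [hr] at hδ
  have hdr : d = r * δ := by
    obtain ⟨j, hj, hjd⟩ := mem_image.mp (hδ ▸ hdA)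
    obtain ⟨v, hv, hvr⟩ := mem_image.mp (hδ ▸ mem_image_of_mem (· * δ) (self_mem_range_succ r))
    have hle : v 0 ≤ d := hS v hv ▸ Finsupp.le_degree 0 v
    have := Nat.mul_le_mul_right δ (Nat.lt_succ_iff.mp (mem_range.mp hj))
    omega
  refine ⟨δ, r, Nat.pos_of_mul_pos_left (hdr ▸ hd), Nat.pos_of_mul_pos_right (hdr ▸ hd), ?_⟩
  rw [span_X_pow_pair_eq, monomialIdeal_pow, ← coe_nsmul]
  congr 2
  refine eq_of_image_apply_zero_eq hS (fun v hv => hdr ▸ degree_eq_of_mem_nsmul ?_ hv) ?_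
  · simp
  · rw [image_apply_zero_nsmul, image_apply_zero_pair_single, nsmul_pair_zero, ← hδ]

end TwoVariables

/-- Corollary 3.4: for an equigenerated monomial ideal `I ⊂ K[x,y]` of height 2 with
`μ(I) = m`: (a) `μ(I^k) ≥ k(m-1)+1` for all `k ≥ 1`; (b) the following are equivalent:
`μ(I^k) = k(m-1)+1` for some `k ≥ 2`; `μ(I^k) = k(m-1)+1` for all `k ≥ 2`;
`I = (xᵃ,yᵃ)^r` for some positive integers `a`, `r`. -/
theorem numGen_powers_eq_iff {K : Type*} [Field K]
    (I : Ideal (MvPolynomial (Fin 2) K)) (m : ℕ)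
    (heq : IsEquigenMonomialIdeal I) (hht : HasHeightTwo I) (hm : mu I = m) :
    (∀ k : ℕ, 1 ≤ k → k * (m - 1) + 1 ≤ mu (I ^ k)) ∧
    ((∃ k : ℕ, 2 ≤ k ∧ mu (I ^ k) = k * (m - 1) + 1) ↔
      (∀ k : ℕ, 2 ≤ k → mu (I ^ k) = k * (m - 1) + 1)) ∧
    ((∃ k : ℕ, 2 ≤ k ∧ mu (I ^ k) = k * (m - 1) + 1) ↔
      (∃ a r : ℕ, 0 < a ∧ 0 < r ∧
        I = (Ideal.span {X 0 ^ a, X 1 ^ a} : Ideal (MvPolynomial (Fin 2) K)) ^ r)) := by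
  obtain ⟨d, S, hS, hI⟩ := heq.exists_eq_monomialIdeal
  obtain ⟨hd, h0, hdA⟩ := (hI ▸ hht).pos_and_mem_image hS
  have hmu : ∀ k, mu (I ^ k) = #(k • S.image (· 0)) := hI ▸ mu_monomialIdeal_pow hS
  have hA : (S.image (· 0)).Nonempty := ⟨0, h0⟩
  have hAm : #(S.image (· 0)) = m := by rw [← hm, ← pow_one I, hmu, one_nsmul]
  have iii_of_i : (∃ k, 2 ≤ k ∧ mu (I ^ k) = k * (m - 1) + 1) →
      ∃ a r : ℕ, 0 < a ∧ 0 < r ∧ I = Ideal.span {X 0 ^ a, X 1 ^ a} ^ r := by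
    rintro ⟨k, hk, hkm⟩
    rw [hmu, ← hAm] at hkm
    exact hI ▸ exists_monomialIdeal_eq_span_X_pow_pair_pow hS hd h0 hdA
      (card_two_nsmul_eq_of_card_nsmul_eq hA hk hkm)
  have ii_of_iii : (∃ a r : ℕ, 0 < a ∧ 0 < r ∧ I = Ideal.span {X 0 ^ a, X 1 ^ a} ^ r) →
      ∀ k, 2 ≤ k → mu (I ^ k) = k * (m - 1) + 1 := by
    rintro ⟨a, r, ha, -, hIr⟩ k -
    rw [← hm, hIr, ← pow_mul, mu_span_X_pow_pair_pow ha, mu_span_X_pow_pair_pow ha,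
      Nat.add_sub_cancel, mul_comm]
  refine ⟨fun k _ => hmu k ▸ hAm ▸ mul_card_sub_one_add_one_le_card_nsmul hA k,
    ⟨fun h => ii_of_iii (iii_of_i h), fun h => ⟨2, le_rfl, h 2 le_rfl⟩⟩,
    iii_of_i, fun h => ⟨2, le_rfl, ii_of_iii h 2 le_rfl⟩⟩
end

section
/- Let K be a field, m ≥ 2, and let a_1 > a_2 > … > a_m = 0 and 0 = b_1 < b_2 < … < b_m be integer sequences, and let I ⊂ K[x,y] be the monomial ideal whose minimal monomial generators are u_i = x^{a_i} y^{b_i} for i = 1,…,m. Suppose that the sequences (a_i) and (b_i) are either both convex (2c_i ≥ c_{i−1} + c_{i+1} for all 2 ≤ i ≤ m−1) or both concave (2c_i ≤ c_{i−1} + c_{i+1} for all 2 ≤ i ≤ m−1). Then μ(I^2) = 2μ(I) − 1; more precisely, if both sequences are concave then the minimal monomial generating set of I^2 is {u_1^2, …, u_m^2, u_1u_2, u_2u_3, …, u_{m−1}u_m}, and if both are convex it is {u_1^2, u_1u_2, …, u_1u_m, u_2u_m, …, u_m^2}. -/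
open MvPolynomial

/-- The set of minimal monomial generators of a monomial ideal (as polynomials): the monomials
in `I` none of whose proper monomial divisors lies in `I`. -/
def MinMonGenSet {K : Type*} [Field K] {n : ℕ} (I : Ideal (MvPolynomial (Fin n) K)) :
    Set (MvPolynomial (Fin n) K) :=
  {p | ∃ v : Fin n →₀ ℕ, p = monomial v (1 : K) ∧ monomial v (1 : K) ∈ I ∧
    ∀ w : Fin n →₀ ℕ, w ≤ v → w ≠ v → monomial w (1 : K) ∉ I}

/-!
The exponents of the minimal monomial generators of an ideal of `K[x, y]` form a staircase: first
coordinates strictly decreasing, second coordinates strictly increasing. Conversely, if `N` of the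
generators have staircase exponents and divide all the others, they are the minimal monomial
generating set, and `μ = N`: taking coefficients at the staircase maps any generating set onto a
spanning set of `K ^ N`.

`I²` is generated by the products `uᵢ uⱼ`. For each `s ∈ [2, 2m]`, the hypothesis on second
differences of `a` and `b` singles out one product with `i + j = s` that divides all the others:
the pair closest to the middle, `(⌊s/2⌋, ⌈s/2⌉)`, when `2cᵢ ≤ cᵢ₋₁ + cᵢ₊₁`, and the pair closest to
the ends, `(max 1 (s - m), min (s - 1) m)`, when `cᵢ₋₁ + cᵢ₊₁ ≤ 2cᵢ`. These `2m - 1` products form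
a staircase.
-/

namespace MvPolynomial

variable {σ K : Type*} [Field K]

theorem monomial_one_mem_span_monomial_one_image_iff {T : Set (σ →₀ ℕ)} {w : σ →₀ ℕ} :
    monomial w (1 : K) ∈ Ideal.span ((fun v => monomial v (1 : K)) '' T) ↔ ∃ t ∈ T, t ≤ w := by
  classical
  simp [mem_ideal_span_monomial_image, support_monomial]

variable {M T : Set (σ →₀ ℕ)}

theorem span_monomial_one_image_eq_of_dominates (hMT : M ⊆ T) (hdom : ∀ t ∈ T, ∃ s ∈ M, s ≤ t) :
    Ideal.span ((fun v => monomial v (1 : K)) '' M) =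
      Ideal.span ((fun v => monomial v (1 : K)) '' T) := by
  refine le_antisymm (Ideal.span_mono (Set.image_mono hMT)) (Ideal.span_le.2 ?_)
  rintro _ ⟨t, ht, rfl⟩
  exact monomial_one_mem_span_monomial_one_image_iff.2 (hdom t ht)

/-- A minimal exponent `w` can only be reached from `f ∈ I` by multiplying with constants. -/
theorem coeff_mul_of_minimal (hM : IsAntichain (· ≤ ·) M) (hdom : ∀ t ∈ T, ∃ s ∈ M, s ≤ t)
    {w : σ →₀ ℕ} (hw : w ∈ M) (p : MvPolynomial σ K) {f : MvPolynomial σ K}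
    (hf : f ∈ Ideal.span ((fun v => monomial v (1 : K)) '' T)) :
    coeff w (p * f) = coeff 0 p * coeff w f := by
  classical
  rw [coeff_mul]
  refine Finset.sum_eq_single (0, w) (fun ⟨x, y⟩ hxy hne => ?_) (by simp)
  rw [Finset.HasAntidiagonal.mem_antidiagonal] at hxy
  by_contra hne0
  have hy : y ∈ f.support := mem_support_iff.2 (right_ne_zero_of_mul hne0)
  obtain ⟨t, ht, hty⟩ := mem_ideal_span_monomial_image.1 hf y hy
  obtain ⟨s, hs, hst⟩ := hdom t ht
  have hyw : y ≤ w := hxy ▸ le_add_self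
  have hsw : s = w := hM.eq hs hw ((hst.trans hty).trans hyw)
  have hyw' : y = w := le_antisymm hyw (hsw ▸ hst.trans hty)
  subst hyw'
  exact hne (by simpa using hxy)

theorem minMonGenSet_span_monomial_one_image {n : ℕ} {M T : Set (Fin n →₀ ℕ)} (hMT : M ⊆ T)
    (hM : IsAntichain (· ≤ ·) M) (hdom : ∀ t ∈ T, ∃ s ∈ M, s ≤ t) :
    MinMonGenSet (Ideal.span ((fun v => monomial v (1 : K)) '' T)) =
      (fun v => monomial v (1 : K)) '' M := by
  ext p
  simp only [MinMonGenSet, monomial_one_mem_span_monomial_one_image_iff, Set.mem_ofPred_eq,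
    Set.mem_image]
  constructor
  · rintro ⟨v, rfl, ⟨t, ht, htv⟩, hmin⟩
    obtain ⟨s, hs, hst⟩ := hdom t ht
    by_cases hsv : s = v
    · exact ⟨v, hsv ▸ hs, rfl⟩
    · exact absurd ⟨s, hMT hs, le_rfl⟩ (hmin s (hst.trans htv) hsv)
  · rintro ⟨v, hv, rfl⟩
    refine ⟨v, rfl, ⟨v, hMT hv, le_rfl⟩, fun w hwv hne ⟨t, ht, htw⟩ => hne ?_⟩
    obtain ⟨s, hs, hst⟩ := hdom t ht
    have hsv : s = v := hM.eq hs hv (hst.trans (htw.trans hwv))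
    exact le_antisymm hwv (hsv ▸ hst.trans htw)

/-- Taking the coefficients at the minimal exponents `M` maps every generating set of the monomial
ideal onto a spanning set of `K ^ M`. -/
theorem card_le_card_of_span_eq_span_monomial {M : Finset (σ →₀ ℕ)} {T : Set (σ →₀ ℕ)} (hMT : ↑M ⊆ T)
    (hM : IsAntichain (· ≤ ·) (M : Set (σ →₀ ℕ))) (hdom : ∀ t ∈ T, ∃ s ∈ M, s ≤ t)
    {s : Finset (MvPolynomial σ K)}
    (hs : Ideal.span (s : Set (MvPolynomial σ K)) = Ideal.span ((fun v => monomial v 1) '' T)) :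
    M.card ≤ s.card := by
  classical
  let φ : MvPolynomial σ K →ₗ[K] (M → K) := LinearMap.pi fun w => lcoeff K (w : σ →₀ ℕ)
  have hφ : ∀ f ∈ Ideal.span (s : Set (MvPolynomial σ K)), φ f ∈ Submodule.span K (φ '' s) := by
    intro f hf
    induction hf using Submodule.span_induction with
    | mem f hf => exact Submodule.subset_span ⟨f, hf, rfl⟩
    | zero => simp
    | add f g _ _ hf hg => simpa using add_mem hf hg
    | smul p f hf' hf =>
      have hfI : f ∈ Ideal.span ((fun v => monomial v 1) '' T) := hs ▸ hf'
      have hpf : φ (p • f) = coeff 0 p • φ f := by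
        funext w
        exact coeff_mul_of_minimal hM hdom w.2 p hfI
      rw [hpf]
      exact Submodule.smul_mem _ _ hf
  have htop : Submodule.span K (φ '' s) = ⊤ := by
    rw [eq_top_iff, ← (Pi.basisFun K M).span_eq, Submodule.span_le]
    rintro _ ⟨w, rfl⟩
    have hw : Pi.basisFun K M w = φ (monomial w 1) := by
      funext w'
      rw [Pi.basisFun_apply, Pi.single_apply]
      simp only [φ, LinearMap.pi_apply, lcoeff_apply, coeff_monomial, Subtype.ext_iff, eq_comm]
    rw [hw]
    refine hφ _ (hs ▸ monomial_one_mem_span_monomial_one_image_iff.2 ⟨w, hMT w.2, le_rfl⟩)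
  calc M.card = Module.finrank K (M → K) := by simp
    _ = Module.finrank K (Submodule.span K ((s.image φ : Finset (M → K)) : Set (M → K))) := by
      rw [Finset.coe_image, htop, finrank_top]
    _ ≤ (s.image φ).card := finrank_span_finset_le_card _
    _ ≤ s.card := Finset.card_image_le

theorem mu_span_monomial_one_image {M : Finset (σ →₀ ℕ)} {T : Set (σ →₀ ℕ)} (hMT : ↑M ⊆ T)
    (hM : IsAntichain (· ≤ ·) (M : Set (σ →₀ ℕ))) (hdom : ∀ t ∈ T, ∃ s ∈ M, s ≤ t) :
    mu (Ideal.span ((fun v => monomial v (1 : K)) '' T)) = M.card := by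
  classical
  have hgen : M.card ∈ {k | ∃ s : Finset (MvPolynomial σ K), s.card = k ∧
      Ideal.span (s : Set _) = Ideal.span ((fun v => monomial v (1 : K)) '' T)} := by
    refine ⟨M.image (monomial · 1), Finset.card_image_of_injective _ ?_, ?_⟩
    · exact fun v w h => by simpa using monomial_left_injective one_ne_zero h
    · rw [Finset.coe_image]
      exact span_monomial_one_image_eq_of_dominates hMT (by simpa using hdom)
  refine le_antisymm (Nat.sInf_le hgen) (le_csInf ⟨_, hgen⟩ ?_)
  rintro _ ⟨s, rfl, hs⟩
  exact card_le_card_of_span_eq_span_monomial hMT hM hdom hs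

end MvPolynomial

noncomputable def expPair (p q : ℕ) : Fin 2 →₀ ℕ := Finsupp.single 0 p + Finsupp.single 1 q

@[simp]
theorem expPair_apply_zero (p q : ℕ) : expPair p q 0 = p := by
  simp [expPair]

@[simp]
theorem expPair_apply_one (p q : ℕ) : expPair p q 1 = q := by
  simp [expPair]

theorem expPair_le_expPair_iff {p q p' q' : ℕ} : expPair p q ≤ expPair p' q' ↔ p ≤ p' ∧ q ≤ q' := by
  simp [Finsupp.le_def, Fin.forall_fin_two]

theorem expPair_inj {p q p' q' : ℕ} : expPair p q = expPair p' q' ↔ p = p' ∧ q = q' := by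
  simp only [le_antisymm_iff, expPair_le_expPair_iff]
  tauto

theorem monomial_expPair {K : Type*} [Field K] (p q : ℕ) :
    monomial (expPair p q) (1 : K) = X 0 ^ p * X 1 ^ q := by
  rw [expPair, X_pow_eq_monomial, X_pow_eq_monomial, monomial_mul, one_mul]

theorem isAntichain_image_expPair {α : Type*} [LinearOrder α] {S : Set α} {P Q : α → ℕ}
    (hP : StrictAntiOn P S) (hQ : StrictMonoOn Q S) :
    IsAntichain (· ≤ ·) ((fun s => expPair (P s) (Q s)) '' S) := by
  rintro _ ⟨s, hs, rfl⟩ _ ⟨t, ht, rfl⟩ hne hle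
  rw [expPair_le_expPair_iff] at hle
  rcases lt_trichotomy s t with h | rfl | h
  · exact (hP hs ht h).not_ge hle.1
  · exact hne rfl
  · exact (hQ ht hs h).not_ge hle.2

section Staircase

variable {K : Type*} [Field K]

theorem mu_and_minMonGenSet_of_staircase {α : Type*} [LinearOrder α] {S : Finset α}
    {P Q : α → ℕ} (hP : StrictAntiOn P S) (hQ : StrictMonoOn Q S) {T : Set (Fin 2 →₀ ℕ)}
    (hST : ∀ s ∈ S, expPair (P s) (Q s) ∈ T)
    (hdom : ∀ t ∈ T, ∃ s ∈ S, expPair (P s) (Q s) ≤ t) :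
    mu (Ideal.span ((fun v => monomial v (1 : K)) '' T)) = S.card ∧
      MinMonGenSet (Ideal.span ((fun v => monomial v (1 : K)) '' T)) =
        (fun s => X 0 ^ P s * X 1 ^ Q s) '' S := by
  classical
  set E := S.image fun s => expPair (P s) (Q s)
  have hE : (E : Set (Fin 2 →₀ ℕ)) = (fun s => expPair (P s) (Q s)) '' S := Finset.coe_image
  have hET : (E : Set (Fin 2 →₀ ℕ)) ⊆ T := by
    rw [hE]
    rintro _ ⟨s, hs, rfl⟩
    exact hST s hs
  have hanti : IsAntichain (· ≤ ·) (E : Set (Fin 2 →₀ ℕ)) := hE ▸ isAntichain_image_expPair hP hQ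
  have hEdom : ∀ t ∈ T, ∃ e ∈ E, e ≤ t := by
    simpa [E] using hdom
  constructor
  · rw [MvPolynomial.mu_span_monomial_one_image hET hanti hEdom, Finset.card_image_of_injOn]
    exact fun s hs t ht h => hP.injOn hs ht (expPair_inj.1 h).1
  · rw [MvPolynomial.minMonGenSet_span_monomial_one_image hET hanti hEdom, hE, Set.image_image]
    simp only [monomial_expPair]

variable {a b : ℕ → ℕ} {u : ℕ → MvPolynomial (Fin 2) K}

theorem span_image_eq_span_monomial (hu : ∀ i, u i = X 0 ^ a i * X 1 ^ b i) (S : Set ℕ) :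
    Ideal.span (u '' S) =
      Ideal.span ((fun v => monomial v (1 : K)) '' ((fun i => expPair (a i) (b i)) '' S)) := by
  rw [Set.image_image]
  simp only [monomial_expPair, ← hu]

theorem span_image_sq_eq_span_monomial (hu : ∀ i, u i = X 0 ^ a i * X 1 ^ b i) (S : Set ℕ) :
    Ideal.span (u '' S) ^ 2 = Ideal.span ((fun v => monomial v (1 : K)) ''
      Set.image2 (fun i j => expPair (a i + a j) (b i + b j)) S S) := by
  rw [pow_two, Ideal.span_mul_span', ← Set.image2_mul, Set.image2_image_left,
    Set.image2_image_right, Set.image_image2]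
  congr 1
  refine Set.image2_congr fun i _ j _ => ?_
  rw [monomial_expPair, hu, hu]
  ring

theorem mu_span_image (hu : ∀ i, u i = X 0 ^ a i * X 1 ^ b i) {S : Finset ℕ}
    (ha : StrictAntiOn a S) (hb : StrictMonoOn b S) :
    mu (Ideal.span (u '' S)) = S.card := by
  rw [span_image_eq_span_monomial hu]
  refine (mu_and_minMonGenSet_of_staircase (K := K) ha hb
    (fun s hs => Set.mem_image_of_mem _ hs) ?_).1
  rintro _ ⟨s, hs, rfl⟩
  exact ⟨s, hs, le_rfl⟩

end Staircase

section Splitting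

variable {k l : ℕ → ℕ} {D S : Set ℕ}

/-- As `k s + l s = s`, passing from `s` to `t > s` strictly raises one of the monotone indices. -/
theorem StrictMonoOn.add_comp_of_splitting {β : Type*} [AddCommMonoid β] [PartialOrder β]
    [IsOrderedCancelAddMonoid β] {c : ℕ → β} (hc : StrictMonoOn c D) (hk : Monotone k)
    (hl : Monotone l) (hkD : Set.MapsTo k S D) (hlD : Set.MapsTo l S D)
    (hkl : ∀ s ∈ S, k s + l s = s) :
    StrictMonoOn (fun s => c (k s) + c (l s)) S := by
  intro s hs t ht hst
  rcases (hk hst.le).lt_or_eq with hkst | hkst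
  · exact add_lt_add_of_lt_of_le (hc (hkD hs) (hkD ht) hkst)
      (hc.monotoneOn (hlD hs) (hlD ht) (hl hst.le))
  · have hlst : l s < l t := by
      have := hkl s hs
      have := hkl t ht
      omega
    simp only [hkst]
    exact add_lt_add_right (hc (hlD hs) (hlD ht) hlst) _

theorem StrictAntiOn.add_comp_of_splitting {c : ℕ → ℕ} (hc : StrictAntiOn c D)
    (hk : Monotone k) (hl : Monotone l) (hkD : Set.MapsTo k S D) (hlD : Set.MapsTo l S D)
    (hkl : ∀ s ∈ S, k s + l s = s) :
    StrictAntiOn (fun s => c (k s) + c (l s)) S :=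
  (hc.dual_right.add_comp_of_splitting hk hl hkD hlD hkl).dual_right

end Splitting

section Square

variable {K : Type*} [Field K] {m : ℕ} {a b k l : ℕ → ℕ} {u : ℕ → MvPolynomial (Fin 2) K}

/-- `(k s, l s)` is an index pair with sum `s` minimising both `a i + a j` and `b i + b j`. -/
theorem mu_sq_and_minMonGenSet_sq (hu : ∀ i, u i = X 0 ^ a i * X 1 ^ b i)
    (ha : StrictAntiOn a (Set.Icc 1 m)) (hb : StrictMonoOn b (Set.Icc 1 m))
    (hk : Monotone k) (hl : Monotone l) (hkm : Set.MapsTo k (Set.Icc 2 (2 * m)) (Set.Icc 1 m))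
    (hlm : Set.MapsTo l (Set.Icc 2 (2 * m)) (Set.Icc 1 m))
    (hkl : ∀ s ∈ Set.Icc 2 (2 * m), k s + l s = s)
    (hka : ∀ i j, 1 ≤ i → i ≤ j → j ≤ m → a (k (i + j)) + a (l (i + j)) ≤ a i + a j)
    (hkb : ∀ i j, 1 ≤ i → i ≤ j → j ≤ m → b (k (i + j)) + b (l (i + j)) ≤ b i + b j) :
    mu (Ideal.span (u '' Set.Icc 1 m) ^ 2) = 2 * m - 1 ∧
      MinMonGenSet (Ideal.span (u '' Set.Icc 1 m) ^ 2) =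
        (fun s => u (k s) * u (l s)) '' Set.Icc 2 (2 * m) := by
  have hS : ((Finset.Icc 2 (2 * m) : Finset ℕ) : Set ℕ) = Set.Icc 2 (2 * m) := Finset.coe_Icc _ _
  have hdom : ∀ i ∈ Set.Icc 1 m, ∀ j ∈ Set.Icc 1 m, i ≤ j →
      expPair (a (k (i + j)) + a (l (i + j))) (b (k (i + j)) + b (l (i + j))) ≤
        expPair (a i + a j) (b i + b j) :=
    fun i hi j hj hij => expPair_le_expPair_iff.2 ⟨hka i j hi.1 hij hj.2, hkb i j hi.1 hij hj.2⟩
  rw [span_image_sq_eq_span_monomial hu]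
  obtain ⟨hmu, hmin⟩ := mu_and_minMonGenSet_of_staircase (K := K) (S := Finset.Icc 2 (2 * m))
    (P := fun s => a (k s) + a (l s)) (Q := fun s => b (k s) + b (l s))
    (T := Set.image2 (fun i j => expPair (a i + a j) (b i + b j)) (Set.Icc 1 m) (Set.Icc 1 m))
    (hS ▸ ha.add_comp_of_splitting hk hl hkm hlm hkl)
    (hS ▸ hb.add_comp_of_splitting hk hl hkm hlm hkl)
    (fun s hs => Set.mem_image2_of_mem (hkm (hS ▸ Finset.mem_coe.2 hs))
      (hlm (hS ▸ Finset.mem_coe.2 hs))) (by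
      rintro _ ⟨i, hi, j, hj, rfl⟩
      refine ⟨i + j, Finset.mem_Icc.2 ⟨by grind, by grind⟩, ?_⟩
      rcases le_total i j with hij | hji
      · exact hdom i hi j hj hij
      · simpa only [add_comm] using hdom j hj i hi hji)
  refine ⟨by rw [hmu, Nat.card_Icc]; omega, ?_⟩
  rw [hmin, hS]
  refine Set.image_congr fun s _ => ?_
  rw [hu, hu]
  ring

end Square

section SecondDifferences

variable {c : ℕ → ℕ} {m : ℕ}

theorem add_le_add_of_two_mul_le
    (hc : ∀ i, 2 ≤ i → i ≤ m - 1 → 2 * c i ≤ c (i - 1) + c (i + 1))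
    {i j : ℕ} (hi : 1 ≤ i) (hij : i ≤ j) (hj : j + 1 ≤ m) :
    c (i + 1) + c j ≤ c i + c (j + 1) := by
  induction j, hij using Nat.le_induction with
  | base => exact le_of_eq (add_comm _ _)
  | succ j hij ih =>
    have hcj := hc (j + 1) (by omega) (by omega)
    rw [Nat.add_sub_cancel] at hcj
    have := ih (by omega)
    omega

theorem add_le_add_of_add_le_two_mul
    (hc : ∀ i, 2 ≤ i → i ≤ m - 1 → c (i - 1) + c (i + 1) ≤ 2 * c i)
    {i j : ℕ} (hi : 1 ≤ i) (hij : i ≤ j) (hj : j + 1 ≤ m) :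
    c i + c (j + 1) ≤ c (i + 1) + c j := by
  induction j, hij using Nat.le_induction with
  | base => exact le_of_eq (add_comm _ _)
  | succ j hij ih =>
    have hcj := hc (j + 1) (by omega) (by omega)
    rw [Nat.add_sub_cancel] at hcj
    have := ih (by omega)
    omega

theorem add_div_two_le (hc : ∀ i, 2 ≤ i → i ≤ m - 1 → 2 * c i ≤ c (i - 1) + c (i + 1))
    {i j : ℕ} (hi : 1 ≤ i) (hij : i ≤ j) (hj : j ≤ m) :
    c ((i + j) / 2) + c ((i + j + 1) / 2) ≤ c i + c j := by
  induction hd : j - i using Nat.strong_induction_on generalizing i j with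
  | _ d ih =>
    by_cases hji : j ≤ i + 1
    · rw [show (i + j) / 2 = i by omega, show (i + j + 1) / 2 = j by omega]
    · have hstep := add_le_add_of_two_mul_le hc hi (j := j - 1) (by omega) (by omega)
      have hinner := ih (j - 1 - (i + 1)) (by omega) (i := i + 1) (j := j - 1) (by omega)
        (by omega) (by omega) rfl
      rw [show i + 1 + (j - 1) = i + j by omega, Nat.sub_add_cancel (by omega)] at *
      omega

theorem add_max_min_le (hc : ∀ i, 2 ≤ i → i ≤ m - 1 → c (i - 1) + c (i + 1) ≤ 2 * c i)
    {i j : ℕ} (hi : 1 ≤ i) (hij : i ≤ j) (hj : j ≤ m) :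
    c (max 1 (i + j - m)) + c (min (i + j - 1) m) ≤ c i + c j := by
  induction i generalizing j with
  | zero => omega
  | succ i ih =>
    by_cases hend : i = 0 ∨ j = m
    · rw [show max 1 (i + 1 + j - m) = i + 1 by omega, show min (i + 1 + j - 1) m = j by omega]
    · have hstep := add_le_add_of_add_le_two_mul hc (i := i) (j := j) (by omega) (by omega)
        (by omega)
      have houter := ih (j := j + 1) (by omega) (by omega) (by omega)
      rw [show i + (j + 1) = i + 1 + j by omega] at houter
      omega

end SecondDifferences

theorem image_Icc_div_two {α : Type*} (f : ℕ → ℕ → α) (m : ℕ) :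
    (fun s => f (s / 2) ((s + 1) / 2)) '' Set.Icc 2 (2 * m) =
      (fun i => f i i) '' Set.Icc 1 m ∪ (fun i => f i (i + 1)) '' Set.Icc 1 (m - 1) := by
  ext x
  simp only [Set.mem_image, Set.mem_union, Set.mem_Icc]
  constructor
  · rintro ⟨s, hs, rfl⟩
    rcases Nat.even_or_odd' s with ⟨i, rfl | rfl⟩
    · exact Or.inl ⟨i, by omega, congrArg₂ f (by omega) (by omega)⟩
    · exact Or.inr ⟨i, by omega, congrArg₂ f (by omega) (by omega)⟩
  · rintro (⟨i, hi, rfl⟩ | ⟨i, hi, rfl⟩)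
    · exact ⟨2 * i, by omega, congrArg₂ f (by omega) (by omega)⟩
    · exact ⟨2 * i + 1, by omega, congrArg₂ f (by omega) (by omega)⟩

theorem image_Icc_max_min {α : Type*} (f : ℕ → ℕ → α) (m : ℕ) :
    (fun s => f (max 1 (s - m)) (min (s - 1) m)) '' Set.Icc 2 (2 * m) =
      (fun j => f 1 j) '' Set.Icc 1 m ∪ (fun i => f i m) '' Set.Icc 1 m := by
  ext x
  simp only [Set.mem_image, Set.mem_union, Set.mem_Icc]
  constructor
  · rintro ⟨s, hs, rfl⟩
    by_cases hsm : s ≤ m + 1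
    · exact Or.inl ⟨s - 1, by omega, congrArg₂ f (by omega) (by omega)⟩
    · exact Or.inr ⟨s - m, by omega, congrArg₂ f (by omega) (by omega)⟩
  · rintro (⟨j, hj, rfl⟩ | ⟨i, hi, rfl⟩)
    · exact ⟨j + 1, by omega, congrArg₂ f (by omega) (by omega)⟩
    · exact ⟨i + m, by omega, congrArg₂ f (by omega) (by omega)⟩

theorem numGen_square_of_convex_or_concave_general {K : Type*} [Field K]
    (m : ℕ) (a b : ℕ → ℕ)
    (ha : ∀ i, 1 ≤ i → i < m → a (i + 1) < a i)
    (hb : ∀ i, 1 ≤ i → i < m → b i < b (i + 1))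
    (u : ℕ → MvPolynomial (Fin 2) K)
    (hu : ∀ i, u i = X 0 ^ a i * X 1 ^ b i)
    (I : Ideal (MvPolynomial (Fin 2) K))
    (hI : I = Ideal.span (u '' Set.Icc 1 m))
    (hcc : (∀ i, 2 ≤ i → i ≤ m - 1 → a (i - 1) + a (i + 1) ≤ 2 * a i ∧
              b (i - 1) + b (i + 1) ≤ 2 * b i) ∨
           (∀ i, 2 ≤ i → i ≤ m - 1 → 2 * a i ≤ a (i - 1) + a (i + 1) ∧
              2 * b i ≤ b (i - 1) + b (i + 1))) :
    mu (I ^ 2) = 2 * mu I - 1 ∧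
    ((∀ i, 2 ≤ i → i ≤ m - 1 → 2 * a i ≤ a (i - 1) + a (i + 1) ∧
        2 * b i ≤ b (i - 1) + b (i + 1)) →
      MinMonGenSet (I ^ 2) =
        ((fun i => u i * u i) '' Set.Icc 1 m) ∪ ((fun i => u i * u (i + 1)) '' Set.Icc 1 (m - 1))) ∧
    ((∀ i, 2 ≤ i → i ≤ m - 1 → a (i - 1) + a (i + 1) ≤ 2 * a i ∧
        b (i - 1) + b (i + 1) ≤ 2 * b i) →
      MinMonGenSet (I ^ 2) =
        ((fun j => u 1 * u j) '' Set.Icc 1 m) ∪ ((fun i => u i * u m) '' Set.Icc 1 m)) := by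
  subst hI
  have ha' : StrictAntiOn a (Set.Icc 1 m) :=
    strictAntiOn_of_add_one_lt Set.ordConnected_Icc fun i _ hi hi1 => ha i hi.1 hi1.2
  have hb' : StrictMonoOn b (Set.Icc 1 m) :=
    strictMonoOn_of_lt_add_one Set.ordConnected_Icc fun i _ hi hi1 => hb i hi.1 hi1.2
  have hmu : mu (Ideal.span (u '' Set.Icc 1 m)) = m := by
    simpa using mu_span_image hu (S := Finset.Icc 1 m) (by simpa using ha') (by simpa using hb')
  have hmid (hcx : ∀ i, 2 ≤ i → i ≤ m - 1 → 2 * a i ≤ a (i - 1) + a (i + 1) ∧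
      2 * b i ≤ b (i - 1) + b (i + 1)) :=
    mu_sq_and_minMonGenSet_sq hu ha' hb' (k := fun s => s / 2) (l := fun s => (s + 1) / 2)
      (fun _ _ h => by dsimp only; omega) (fun _ _ h => by dsimp only; omega)
      (fun _ hs => by simp only [Set.mem_Icc] at hs ⊢; omega)
      (fun _ hs => by simp only [Set.mem_Icc] at hs ⊢; omega) (fun _ _ => by omega)
      (fun _ _ => add_div_two_le fun i h1 h2 => (hcx i h1 h2).1)
      (fun _ _ => add_div_two_le fun i h1 h2 => (hcx i h1 h2).2)
  have hend (hcv : ∀ i, 2 ≤ i → i ≤ m - 1 → a (i - 1) + a (i + 1) ≤ 2 * a i ∧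
      b (i - 1) + b (i + 1) ≤ 2 * b i) :=
    mu_sq_and_minMonGenSet_sq hu ha' hb' (k := fun s => max 1 (s - m))
      (l := fun s => min (s - 1) m)
      (fun _ _ h => by dsimp only; omega) (fun _ _ h => by dsimp only; omega)
      (fun _ hs => by simp only [Set.mem_Icc] at hs ⊢; omega)
      (fun _ hs => by simp only [Set.mem_Icc] at hs ⊢; omega)
      (fun _ hs => by simp only [Set.mem_Icc] at hs; omega)
      (fun _ _ => add_max_min_le fun i h1 h2 => (hcv i h1 h2).1)
      (fun _ _ => add_max_min_le fun i h1 h2 => (hcv i h1 h2).2)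
  refine ⟨?_, fun hcx => ?_, fun hcv => ?_⟩
  · rw [hmu]
    rcases hcc with hcv | hcx
    exacts [(hend hcv).1, (hmid hcx).1]
  · rw [(hmid hcx).2, image_Icc_div_two (fun i j => u i * u j)]
  · rw [(hend hcv).2, image_Icc_max_min (fun i j => u i * u j)]

/-- Proposition 4.2: let `m ≥ 2`, `a₁ > a₂ > … > a_m = 0`, `0 = b₁ < b₂ < … < b_m`, and let
`I ⊂ K[x,y]` be the monomial ideal minimally generated by `uᵢ = x^{aᵢ} y^{bᵢ}`, `i = 1,…,m`.
If the sequences `(aᵢ)` and `(bᵢ)` are both convex or both concave, then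
`μ(I²) = 2μ(I) - 1`; more precisely, in the concave case the minimal monomial generating set
of `I²` is `{u₁², …, u_m², u₁u₂, …, u_{m-1}u_m}` and in the convex case it is
`{u₁², u₁u₂, …, u₁u_m, u₂u_m, …, u_m²}`. -/
theorem numGen_square_of_convex_or_concave {K : Type*} [Field K]
    (m : ℕ) (hm : 2 ≤ m) (a b : ℕ → ℕ)
    (ha : ∀ i, 1 ≤ i → i < m → a (i + 1) < a i) (ham : a m = 0)
    (hb1 : b 1 = 0) (hb : ∀ i, 1 ≤ i → i < m → b i < b (i + 1))
    (u : ℕ → MvPolynomial (Fin 2) K)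
    (hu : ∀ i, u i = X 0 ^ a i * X 1 ^ b i)
    (I : Ideal (MvPolynomial (Fin 2) K))
    (hI : I = Ideal.span (u '' Set.Icc 1 m))
    (hcc : (∀ i, 2 ≤ i → i ≤ m - 1 → a (i - 1) + a (i + 1) ≤ 2 * a i ∧
              b (i - 1) + b (i + 1) ≤ 2 * b i) ∨
           (∀ i, 2 ≤ i → i ≤ m - 1 → 2 * a i ≤ a (i - 1) + a (i + 1) ∧
              2 * b i ≤ b (i - 1) + b (i + 1))) :
    mu (I ^ 2) = 2 * mu I - 1 ∧
    ((∀ i, 2 ≤ i → i ≤ m - 1 → 2 * a i ≤ a (i - 1) + a (i + 1) ∧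
        2 * b i ≤ b (i - 1) + b (i + 1)) →
      MinMonGenSet (I ^ 2) =
        ((fun i => u i * u i) '' Set.Icc 1 m) ∪ ((fun i => u i * u (i + 1)) '' Set.Icc 1 (m - 1))) ∧
    ((∀ i, 2 ≤ i → i ≤ m - 1 → a (i - 1) + a (i + 1) ≤ 2 * a i ∧
        b (i - 1) + b (i + 1) ≤ 2 * b i) →
      MinMonGenSet (I ^ 2) =
        ((fun j => u 1 * u j) '' Set.Icc 1 m) ∪ ((fun i => u i * u m) '' Set.Icc 1 m)) :=
  numGen_square_of_convex_or_concave_general m a b ha hb u hu I hI hcc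
end
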